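/- Let X be a pseudocyclic scheme of degree n and valency k ≥ 2, meaning that every irreflexive basis relation s satisfies n_s = k and c(s) = k − 1. If n > 3k⁶, then X is saturated, i.e., every set of at most four elements of S_k has a common neighbor in the graph 𝔛. -/

import Mathlib

open Finset

abbrev BRel (Ω : Type*) := Finset (Ω × Ω)

variable {Ω : Type*} [Fintype Ω] [DecidableEq Ω]

/-- The diagonal relation `1_Ω`. -/
def diagRel (Ω : Type*) [Fintype Ω] [DecidableEq Ω] : BRel Ω :=
  Finset.univ.filter (fun p => p.1 = p.2)

/-- The converse relation `r*`. -/
def convRel (r : BRel Ω) : BRel Ω := r.image Prod.swap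

/-- Relational composition `a ∘ b`. -/
def compBRel (a b : BRel Ω) : BRel Ω :=
  Finset.univ.filter (fun p => ∃ γ, (p.1, γ) ∈ a ∧ (γ, p.2) ∈ b)

/-- An association scheme on a finite set `Ω`: a partition `S` of `Ω × Ω` into nonempty
basis relations, containing the diagonal, closed under converse, with well-defined
intersection numbers `c r s t`. -/
structure AssocScheme (Ω : Type*) [Fintype Ω] [DecidableEq Ω] where
  S : Finset (BRel Ω)
  nonempty : ∀ s ∈ S, s.Nonempty
  partition : ∀ p : Ω × Ω, ∃! s, s ∈ S ∧ p ∈ s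
  diag_mem : diagRel Ω ∈ S
  conv_mem : ∀ s ∈ S, convRel s ∈ S
  c : BRel Ω → BRel Ω → BRel Ω → ℕ
  c_spec : ∀ r ∈ S, ∀ s ∈ S, ∀ t ∈ S, ∀ p ∈ t,
    (Finset.univ.filter (fun γ => (p.1, γ) ∈ r ∧ (γ, p.2) ∈ s)).card = c r s t

namespace AssocScheme

variable (X : AssocScheme Ω)

/-- The valency `n_s = c_{s,s*}^{1}`. -/
def n (s : BRel Ω) : ℕ := X.c s (convRel s) (diagRel Ω)

/-- The complex product `rs` of two basis relations: all `t ∈ S` with `c_{r,s}^t ≠ 0`. -/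
def cp (r s : BRel Ω) : Finset (BRel Ω) := X.S.filter (fun t => X.c r s t ≠ 0)

/-- The complex product of two sets of basis relations. -/
def cpS (A B : Finset (BRel Ω)) : Finset (BRel Ω) :=
  A.biUnion fun a => B.biUnion fun b => X.cp a b

/-- `S_k`: the basis relations of valency `k`. -/
def Sk (k : ℕ) : Finset (BRel Ω) := X.S.filter (fun s => X.n s = k)

/-- `x ∼ y`: every `s` in the complex product `x*y` satisfies `c_{x,s}^y = 1`. -/
def adj (x y : BRel Ω) : Prop := ∀ s ∈ X.cp (convRel x) y, X.c x s y = 1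

/-- `r(α,β)`: the unique basis relation containing `(α,β)`. -/
noncomputable def rel (α β : Ω) : BRel Ω := (X.partition (α, β)).choose

/-- The indistinguishing number `c(s) = Σ_t c_{t,t*}^s`. -/
def ind (s : BRel Ω) : ℕ := ∑ t ∈ X.S, X.c t (convRel t) s

/-- `k`-saturated: every at most four element subset of `S_k` has a common neighbor. -/
def kSaturated (k : ℕ) : Prop :=
  ∀ T ⊆ X.Sk k, T.card ≤ 4 → ∃ y ∈ X.Sk k, ∀ x ∈ T, X.adj y x

/-- `r ∈ x*z` and `s ∈ z*y` are linked with respect to `(x,y,z)`, with witness `t`. -/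
def linked (k : ℕ) (x y z r s t : BRel Ω) : Prop :=
  ∃ q ∈ X.Sk k, X.adj q x ∧ X.adj q y ∧ X.adj q z ∧
    ∃ u ∈ X.cp (convRel x) q, ∃ v ∈ X.cp (convRel y) q, ∃ w ∈ X.cp (convRel z) q,
      t ∈ X.cp r s ∧
      X.cp (convRel x) z ∩ X.cp u (convRel w) = {r} ∧
      X.cp (convRel z) y ∩ X.cp w (convRel v) = {s} ∧
      X.cp (convRel x) y ∩ X.cp u (convRel v) = {t}

/-- Desarguesian with respect to `S_k`. -/
def Desarguesian (k : ℕ) : Prop :=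
  ∀ x ∈ X.Sk k, ∀ y ∈ X.Sk k, ∀ z ∈ X.Sk k, X.adj x z → X.adj z y →
    ∀ r ∈ X.cp (convRel x) z, ∀ s ∈ X.cp (convRel z) y, ∃ t, X.linked k x y z r s t

end AssocScheme

/-- `αr = {β : (α,β) ∈ r}`. -/
def relImage (r : BRel Ω) (α : Ω) : Finset Ω := (r.filter (fun p => p.1 = α)).image Prod.snd

/-- The restriction `r_{x,y} = r ∩ (αx × αy)`. -/
def restrictRel (α : Ω) (r x y : BRel Ω) : BRel Ω :=
  r.filter (fun p => p.1 ∈ relImage x α ∧ p.2 ∈ relImage y α)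


/-- An algebraic isomorphism: a bijection between the sets of basis relations
preserving all intersection numbers. -/
def AlgIso {Ω Ω' : Type*} [Fintype Ω] [DecidableEq Ω] [Fintype Ω'] [DecidableEq Ω']
    (X : AssocScheme Ω) (X' : AssocScheme Ω') (φ : BRel Ω → BRel Ω') : Prop :=
  Set.BijOn φ ↑X.S ↑X'.S ∧
    ∀ r ∈ X.S, ∀ s ∈ X.S, ∀ t ∈ X.S, X.c r s t = X'.c (φ r) (φ s) (φ t)

/-- A `φ`-faithful map with domain `D`. -/
def Faithful {Ω Ω' : Type*} [Fintype Ω] [DecidableEq Ω] [Fintype Ω'] [DecidableEq Ω']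
    (X : AssocScheme Ω) (X' : AssocScheme Ω') (φ : BRel Ω → BRel Ω')
    (D : Finset Ω) (f : Ω → Ω') : Prop :=
  Set.InjOn f ↑D ∧ ∀ a ∈ D, ∀ b ∈ D, φ (X.rel a b) = X'.rel (f a) (f b)

/-- `f` is `φ`-extendable to the point `γ`. -/
def ExtendableAt {Ω Ω' : Type*} [Fintype Ω] [DecidableEq Ω] [Fintype Ω'] [DecidableEq Ω']
    (X : AssocScheme Ω) (X' : AssocScheme Ω') (φ : BRel Ω → BRel Ω')
    (D : Finset Ω) (f : Ω → Ω') (γ : Ω) : Prop :=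
  ∃ g : Ω → Ω', (∀ a ∈ D, g a = f a) ∧ Faithful X X' φ (insert γ D) g

/-!
Fix `x ∈ S_k` and a point `α`, let `c` bound the indistinguishing numbers of the irreflexive
relations, and put `C(y, β) = c_{x*y}^{r(α,β)} = |{γ ∈ αx* : (γ,β) ∈ y}|`. Counting ordered pairs
of distinct `γ, δ ∈ αx*` with `r(γ,β) = r(δ,β)` gives
`Σ_{y,β} C(C - 1) = Σ_{γ ≠ δ} c(r(γ,δ)) ≤ k(k - 1)c`, so at most `k(k - 1)c/2` relations `y`
have some `c_{x*y}^t ≥ 2`, and `x` is one of them. For every other `y ∈ S_k`, the identity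
`n_x c_{ys}^x = n_y c_{sx*}^{y*}` turns `c_{ys}^x` into `c_{y*x}^s ≤ 1`, so `y ∼ x`. Four
elements of `S_k` thus exclude at most `2k(k - 1)c` elements of `S_k`, fewer than
`|S_k| = (n - 1)/k` once `n > 3k⁶` and `c = k - 1`.
-/

omit [Fintype Ω] in
theorem mem_relImage {r : BRel Ω} {α β : Ω} : β ∈ relImage r α ↔ (α, β) ∈ r := by
  simp [relImage]

omit [Fintype Ω] in
theorem mem_convRel {r : BRel Ω} {α β : Ω} : (α, β) ∈ convRel r ↔ (β, α) ∈ r := by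
  simp [convRel, Prod.ext_iff]

theorem mem_diagRel {α β : Ω} : (α, β) ∈ diagRel Ω ↔ α = β := by
  simp [diagRel]

omit [Fintype Ω] in
theorem convRel_convRel (r : BRel Ω) : convRel (convRel r) = r := by
  ext ⟨α, β⟩
  simp [mem_convRel]

theorem convRel_ne_diagRel {r : BRel Ω} (hr : r ≠ diagRel Ω) : convRel r ≠ diagRel Ω := by
  refine fun h => hr ?_
  ext ⟨α, β⟩
  rw [← mem_convRel, h, mem_diagRel, mem_diagRel, eq_comm]

namespace AssocScheme

theorem nonempty_type (X : AssocScheme Ω) : Nonempty Ω :=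
  let ⟨p, _⟩ := X.nonempty _ X.diag_mem
  ⟨p.1⟩

variable (X : AssocScheme Ω)

theorem rel_mem (α β : Ω) : X.rel α β ∈ X.S :=
  (X.partition (α, β)).choose_spec.1.1

theorem mem_rel (α β : Ω) : (α, β) ∈ X.rel α β :=
  (X.partition (α, β)).choose_spec.1.2

theorem rel_unique {s : BRel Ω} {α β : Ω} (hs : s ∈ X.S) (h : (α, β) ∈ s) :
    s = X.rel α β :=
  (X.partition (α, β)).choose_spec.2 s ⟨hs, h⟩

theorem eq_of_mem_of_mem {r s : BRel Ω} (hr : r ∈ X.S) (hs : s ∈ X.S) {α β : Ω}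
    (hαβr : (α, β) ∈ r) (hαβs : (α, β) ∈ s) : r = s :=
  (X.rel_unique hr hαβr).trans (X.rel_unique hs hαβs).symm

theorem rel_ne_diagRel {α β : Ω} (h : α ≠ β) : X.rel α β ≠ diagRel Ω :=
  fun hd => h (mem_diagRel.1 (hd ▸ X.mem_rel α β))

theorem card_filter_relImage {r s : BRel Ω} (hr : r ∈ X.S) (hs : s ∈ X.S) (α β : Ω) :
    #((relImage r α).filter fun γ => (γ, β) ∈ s) = X.c r s (X.rel α β) := by
  rw [← X.c_spec r hr s hs _ (X.rel_mem α β) _ (X.mem_rel α β)]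
  congr 1
  ext γ
  simp [mem_relImage]

theorem card_relImage {s : BRel Ω} (hs : s ∈ X.S) (α : Ω) : #(relImage s α) = X.n s := by
  rw [n, ← X.c_spec s hs _ (X.conv_mem s hs) _ X.diag_mem (α, α) (mem_diagRel.2 rfl)]
  congr 1
  ext γ
  simp [mem_relImage, mem_convRel]

theorem n_pos {s : BRel Ω} (hs : s ∈ X.S) : 0 < X.n s := by
  obtain ⟨⟨α, β⟩, h⟩ := X.nonempty s hs
  rw [← X.card_relImage hs α]
  exact card_pos.2 ⟨β, mem_relImage.2 h⟩

theorem exists_mem {s : BRel Ω} (hs : s ∈ X.S) (α : Ω) : ∃ β, (α, β) ∈ s := by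
  obtain ⟨β, h⟩ := card_pos.1 ((X.card_relImage hs α).symm ▸ X.n_pos hs)
  exact ⟨β, mem_relImage.1 h⟩

theorem n_diagRel : X.n (diagRel Ω) = 1 := by
  obtain ⟨α⟩ := X.nonempty_type
  rw [← X.card_relImage X.diag_mem α, card_eq_one]
  exact ⟨α, by ext; simp [mem_relImage, mem_diagRel, eq_comm]⟩

theorem sum_n_eq_card : ∑ s ∈ X.S, X.n s = Fintype.card Ω := by
  obtain ⟨α⟩ := X.nonempty_type
  rw [← card_univ, card_eq_sum_card_fiberwise fun β _ => X.rel_mem α β]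
  refine sum_congr rfl fun s hs => ?_
  rw [← X.card_relImage hs α]
  congr 1
  ext β
  simpa [mem_relImage] using
    ⟨fun h => (X.rel_unique hs h).symm, fun h => h ▸ X.mem_rel α β⟩

theorem card_le_one_add_mul_card_Sk {k : ℕ} (hval : ∀ s ∈ X.S, s ≠ diagRel Ω → X.n s = k) :
    Fintype.card Ω ≤ 1 + k * #(X.Sk k) := by
  rw [← X.sum_n_eq_card, ← add_sum_erase _ _ X.diag_mem, X.n_diagRel,
    sum_congr rfl fun s hs => hval s (mem_of_mem_erase hs) (ne_of_mem_erase hs),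
    sum_const, smul_eq_mul, mul_comm]
  gcongr
  intro s hs
  have hsS := mem_of_mem_erase hs
  exact mem_filter.2 ⟨hsS, hval s hsS (ne_of_mem_erase hs)⟩

theorem n_mul_c_eq {r s t : BRel Ω} (hr : r ∈ X.S) (hs : s ∈ X.S) (ht : t ∈ X.S) :
    X.n t * X.c r s t = X.n r * X.c s (convRel t) (convRel r) := by
  obtain ⟨α⟩ := X.nonempty_type
  -- both sides count the pairs `(γ, β)` with `(α, γ) ∈ r`, `(γ, β) ∈ s` and `(α, β) ∈ t`
  calc X.n t * X.c r s t
      = ∑ β ∈ relImage t α, #((relImage r α).filter fun γ => (γ, β) ∈ s) := by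
        rw [sum_congr rfl fun β hβ => ?_, sum_const, X.card_relImage ht, smul_eq_mul]
        rw [X.card_filter_relImage hr hs, ← X.rel_unique ht (mem_relImage.1 hβ)]
    _ = ∑ γ ∈ relImage r α, #((relImage t α).filter fun β => (γ, β) ∈ s) :=
        (sum_card_bipartiteAbove_eq_sum_card_bipartiteBelow _).symm
    _ = X.n r * X.c s (convRel t) (convRel r) := by
        rw [sum_congr rfl fun γ hγ => ?_, sum_const, X.card_relImage hr, smul_eq_mul]
        have hfilter : ((relImage t α).filter fun β => (γ, β) ∈ s)
            = (relImage s γ).filter fun β => (β, α) ∈ convRel t := by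
          ext β
          simp [mem_relImage, mem_convRel, and_comm]
        rw [hfilter, X.card_filter_relImage hs (X.conv_mem t ht),
          ← X.rel_unique (X.conv_mem r hr) (mem_convRel.2 (mem_relImage.1 hγ))]

theorem c_convRel {r s t : BRel Ω} (hr : r ∈ X.S) (hs : s ∈ X.S) (ht : t ∈ X.S) :
    X.c (convRel s) (convRel r) (convRel t) = X.c r s t := by
  obtain ⟨⟨α, β⟩, hαβ⟩ := X.nonempty t ht
  rw [← X.c_spec r hr s hs t ht _ hαβ, ← X.c_spec _ (X.conv_mem s hs) _ (X.conv_mem r hr) _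
    (X.conv_mem t ht) (β, α) (mem_convRel.2 hαβ)]
  congr 1
  ext γ
  simp [mem_convRel, and_comm]

theorem ne_diagRel_of_mem_cp {x y s : BRel Ω} (hx : x ∈ X.S) (hy : y ∈ X.S) (hxy : y ≠ x)
    (hs : s ∈ X.cp (convRel y) x) : s ≠ diagRel Ω := by
  rintro rfl
  obtain ⟨α⟩ := X.nonempty_type
  have hc := (mem_filter.1 hs).2
  rw [← X.c_spec _ (X.conv_mem y hy) x hx _ X.diag_mem (α, α) (mem_diagRel.2 rfl)] at hc
  obtain ⟨γ, hγ⟩ := card_ne_zero.1 hc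
  simp only [mem_filter, mem_univ, true_and, mem_convRel] at hγ
  exact hxy (X.eq_of_mem_of_mem hy hx hγ.1 hγ.2)

theorem adj_of_c_le_one {x y : BRel Ω} (hx : x ∈ X.S) (hy : y ∈ X.S) (hxy : X.n y = X.n x)
    (hval : ∀ s ∈ X.cp (convRel y) x, X.n s = X.n (convRel y))
    (hle : ∀ t ∈ X.S, X.c (convRel x) y t ≤ 1) : X.adj y x := by
  intro s hs
  obtain ⟨hsS, hc⟩ := mem_filter.1 hs
  -- `c_{ys}^x = c_{sx*}^{y*} = c_{x*y}^{s*} = c_{y*x}^s`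
  have h₁ := X.n_mul_c_eq hy hsS hx
  have h₂ := X.n_mul_c_eq hsS (X.conv_mem x hx) (X.conv_mem y hy)
  have h₃ := X.c_convRel (X.conv_mem y hy) hx hsS
  rw [convRel_convRel] at h₂ h₃
  rw [hxy] at h₁
  rw [hval s hs] at h₂
  have hcs : X.c y s x = X.c (convRel x) y (convRel s) :=
    (Nat.eq_of_mul_eq_mul_left (X.n_pos hx) h₁).trans
      (Nat.eq_of_mul_eq_mul_left (X.n_pos (X.conv_mem y hy)) h₂)
  have := hle _ (X.conv_mem s hsS)
  omega

theorem ind_rel_eq_sum_card (γ δ : Ω) :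
    X.ind (X.rel γ δ) = ∑ t ∈ X.S, #(univ.filter fun β => (γ, β) ∈ t ∧ (δ, β) ∈ t) := by
  refine sum_congr rfl fun t ht => ?_
  rw [← X.c_spec t ht _ (X.conv_mem t ht) _ (X.rel_mem γ δ) _ (X.mem_rel γ δ)]
  simp [mem_convRel]

theorem sum_sum_card_offDiag_filter (P : Finset Ω) :
    ∑ y ∈ X.S, ∑ β, #((P.filter fun γ => (γ, β) ∈ y).offDiag)
      = ∑ p ∈ P.offDiag, X.ind (X.rel p.1 p.2) := by
  have hoff : ∀ (y : BRel Ω) β, (P.filter fun γ => (γ, β) ∈ y).offDiag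
      = P.offDiag.filter fun p => (p.1, β) ∈ y ∧ (p.2, β) ∈ y := by
    intro y β
    ext ⟨γ, δ⟩
    simp only [mem_offDiag, mem_filter]
    tauto
  simp_rw [hoff, card_filter]
  rw [sum_congr rfl fun y _ => sum_comm, sum_comm]
  refine sum_congr rfl fun p _ => ?_
  rw [X.ind_rel_eq_sum_card]
  simp only [card_filter]

def nonMultFree (x : BRel Ω) : Finset (BRel Ω) :=
  X.S.filter fun y => ∃ t ∈ X.S, 2 ≤ X.c (convRel x) y t

theorem self_mem_nonMultFree {x : BRel Ω} (hx : x ∈ X.S) (h : 2 ≤ X.n (convRel x)) :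
    x ∈ X.nonMultFree x :=
  mem_filter.2 ⟨hx, diagRel Ω, X.diag_mem, by rwa [n, convRel_convRel] at h⟩

theorem two_le_sum_card_offDiag {x y : BRel Ω} (hx : x ∈ X.S) (hy : y ∈ X.nonMultFree x)
    (α : Ω) : 2 ≤ ∑ β, #(((relImage (convRel x) α).filter fun γ => (γ, β) ∈ y).offDiag) := by
  obtain ⟨hyS, t, ht, h2⟩ := mem_filter.1 hy
  obtain ⟨β, hβ⟩ := X.exists_mem ht α
  set P := relImage (convRel x) α
  have hcard : #(P.filter fun γ => (γ, β) ∈ y) = X.c (convRel x) y t := by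
    rw [X.card_filter_relImage (X.conv_mem x hx) hyS, ← X.rel_unique ht hβ]
  calc 2 ≤ #((P.filter fun γ => (γ, β) ∈ y).offDiag) := by
        rw [offDiag_card, hcard]
        have := Nat.mul_le_mul_right (X.c (convRel x) y t) h2
        omega
    _ ≤ ∑ β, #((P.filter fun γ => (γ, β) ∈ y).offDiag) :=
        single_le_sum (f := fun β => #((P.filter fun γ => (γ, β) ∈ y).offDiag))
          (fun _ _ => Nat.zero_le _) (mem_univ β)

theorem two_mul_card_nonMultFree_le {x : BRel Ω} (hx : x ∈ X.S) {c : ℕ}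
    (hind : ∀ s ∈ X.S, s ≠ diagRel Ω → X.ind s ≤ c) :
    2 * #(X.nonMultFree x) ≤ X.n (convRel x) * (X.n (convRel x) - 1) * c := by
  obtain ⟨α⟩ := X.nonempty_type
  set P := relImage (convRel x) α
  calc 2 * #(X.nonMultFree x) = ∑ _y ∈ X.nonMultFree x, 2 := by
        rw [sum_const, smul_eq_mul, mul_comm]
    _ ≤ ∑ y ∈ X.nonMultFree x, ∑ β, #((P.filter fun γ => (γ, β) ∈ y).offDiag) :=
        sum_le_sum fun y hy => X.two_le_sum_card_offDiag hx hy α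
    _ ≤ ∑ y ∈ X.S, ∑ β, #((P.filter fun γ => (γ, β) ∈ y).offDiag) :=
        sum_le_sum_of_subset (filter_subset _ _)
    _ = ∑ p ∈ P.offDiag, X.ind (X.rel p.1 p.2) := X.sum_sum_card_offDiag_filter P
    _ ≤ #P.offDiag * c := sum_le_card_nsmul _ _ _ fun p hp =>
        hind _ (X.rel_mem _ _) (X.rel_ne_diagRel (mem_offDiag.1 hp).2.2)
    _ = X.n (convRel x) * (X.n (convRel x) - 1) * c := by
        rw [offDiag_card, X.card_relImage (X.conv_mem x hx), Nat.mul_sub_one]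

theorem kSaturated_of_lt_card_Sk {k c : ℕ} (hk : 2 ≤ k)
    (hval : ∀ s ∈ X.S, s ≠ diagRel Ω → X.n s = k)
    (hind : ∀ s ∈ X.S, s ≠ diagRel Ω → X.ind s ≤ c)
    (hcard : 2 * k * (k - 1) * c < #(X.Sk k)) : X.kSaturated k := by
  intro T hT hT4
  have hSk : ∀ x ∈ X.Sk k, x ∈ X.S ∧ X.n x = k := fun x hx => mem_filter.1 hx
  have hconv : ∀ x ∈ X.Sk k, X.n (convRel x) = k := fun x hx =>
    hval _ (X.conv_mem x (hSk x hx).1) <| convRel_ne_diagRel fun h => by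
      have := X.n_diagRel
      rw [← h, (hSk x hx).2] at this
      omega
  have hB : #(T.biUnion X.nonMultFree) < #(X.Sk k) := by
    have hsum : 2 * ∑ x ∈ T, #(X.nonMultFree x) ≤ ∑ _x ∈ T, k * (k - 1) * c := by
      rw [mul_sum]
      refine sum_le_sum fun x hx => ?_
      simpa [hconv x (hT hx)] using X.two_mul_card_nonMultFree_le (hSk x (hT hx)).1 hind
    rw [sum_const, smul_eq_mul] at hsum
    have := Nat.mul_le_mul_right (k * (k - 1) * c) hT4
    have := card_biUnion_le (s := T) (t := X.nonMultFree)
    rw [show 2 * k * (k - 1) * c = 2 * (k * (k - 1) * c) by ring] at hcard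
    omega
  obtain ⟨y, hy, hyB⟩ := exists_mem_notMem_of_card_lt_card hB
  refine ⟨y, hy, fun x hxT => ?_⟩
  have hx := hSk x (hT hxT)
  have hyx : y ∉ X.nonMultFree x := fun h => hyB (mem_biUnion.2 ⟨x, hxT, h⟩)
  have hne : y ≠ x := by
    rintro rfl
    exact hyx (X.self_mem_nonMultFree hx.1 (hconv y hy ▸ hk))
  refine X.adj_of_c_le_one hx.1 (hSk y hy).1 ((hSk y hy).2.trans hx.2.symm)
    (fun s hs => ?_) (fun t ht => ?_)
  · rw [hconv y hy]
    exact hval s (mem_filter.1 hs).1 (X.ne_diagRel_of_mem_cp hx.1 (hSk y hy).1 hne hs)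
  · by_contra! h
    exact hyx (mem_filter.2 ⟨(hSk y hy).1, t, ht, h⟩)

end AssocScheme

theorem pseudocyclic_saturated (X : AssocScheme Ω) (k : ℕ) (hk : 2 ≤ k)
    (hps : ∀ s ∈ X.S, s ≠ diagRel Ω → X.n s = k ∧ X.ind s = k - 1)
    (hn : Fintype.card Ω > 3 * k ^ 6) :
    X.kSaturated k := by
  have hval : ∀ s ∈ X.S, s ≠ diagRel Ω → X.n s = k := fun s hs hd => (hps s hs hd).1
  refine X.kSaturated_of_lt_card_Sk hk hval (fun s hs hd => (hps s hs hd).2.le) ?_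
  have hN := X.card_le_one_add_mul_card_Sk hval
  by_contra! hm
  have hk3 : 2 * k * (k - 1) * (k - 1) ≤ 2 * k ^ 3 := by
    have := Nat.sub_le k 1
    calc 2 * k * (k - 1) * (k - 1) ≤ 2 * k * k * k := by gcongr
      _ = 2 * k ^ 3 := by ring
  have : k * #(X.Sk k) ≤ 2 * k ^ 4 := by nlinarith
  have : k ^ 4 ≤ k ^ 6 := Nat.pow_le_pow_right (by omega) (by norm_num)
  have : 1 ≤ k ^ 4 := Nat.one_le_pow _ _ (by omega)
  omega
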